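/- arXiv:1410.1472 — 3 statements merged into one kernel-verified Lean document; each statement's English description precedes it below -/
import Mathlib

section
/- The isotropic Mermin box P = p·(1/2)(P_PR^{000} + P_PR^{111}) + (1−p)·P_N with 0 ≤ p ≤ 1 has exactly one nonzero Mermin distance, equal to 2p, and hence Mermin discord Q = 2p; moreover all its Bell distances are equal, so its Bell discord G = 0. -/
open scoped Matrix Kronecker

noncomputable section

/-- A bipartite box: `P i j m n` is the probability of outputs `m,n` given inputs `i,j`. -/
abbrev Box := Fin 2 → Fin 2 → Fin 2 → Fin 2 → ℝ

/-- A box has nonnegative entries, normalized for every input pair. -/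
def IsBox (P : Box) : Prop :=
  (∀ i j m n, 0 ≤ P i j m n) ∧ ∀ i j, (∑ m, ∑ n, P i j m n) = 1

/-- Nonsignaling conditions. -/
def NonSignaling (P : Box) : Prop :=
  (∀ i j j' m, (∑ n, P i j m n) = ∑ n, P i j' m n) ∧
  (∀ i i' j n, (∑ m, P i j m n) = ∑ m, P i' j m n)

/-- `(-1)^k` for a bit `k`. -/
def sgn (k : Fin 2) : ℝ := (-1 : ℝ) ^ (k : ℕ)

/-- Correlator `⟨A_i B_j⟩`. -/
def corr (P : Box) (i j : Fin 2) : ℝ := ∑ m, ∑ n, sgn (m + n) * P i j m n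

/-- Marginal expectation `⟨A_i⟩` of Alice. -/
def margA (P : Box) (i : Fin 2) : ℝ := ∑ m, ∑ n, sgn m * P i 0 m n

/-- Marginal expectation `⟨B_j⟩` of Bob. -/
def margB (P : Box) (j : Fin 2) : ℝ := ∑ m, ∑ n, sgn n * P 0 j m n

/-- The PR boxes `P_PR^{αβγ}`. -/
def PRbox (a b g : Fin 2) : Box :=
  fun i j m n => if m + n = i * j + a * i + b * j + g then 1/2 else 0

/-- The local deterministic boxes `P_D^{αβγε}`. -/
def Dbox (a b g e : Fin 2) : Box :=
  fun i j m n => if m = a * i + b ∧ n = g * j + e then 1 else 0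

/-- The white-noise box `P_N`. -/
def whiteNoise : Box := fun _ _ _ _ => 1/4

/-- The signed Bell-CHSH functions `B_{αβγ}`. -/
def BellF (P : Box) (a b g : Fin 2) : ℝ :=
  sgn g * corr P 0 0 + sgn (b + g) * corr P 0 1 + sgn (a + g) * corr P 1 0 +
    sgn (a + b + g + 1) * corr P 1 1

/-- The Bell distances `B_{αβ} = max_γ |B_{αβγ}|`. -/
def BellD (P : Box) (a b : Fin 2) : ℝ := max |BellF P a b 0| |BellF P a b 1|

/-- Bell discord `G`. -/
def BellDiscord (P : Box) : ℝ :=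
  min (min (|(|BellD P 0 0 - BellD P 0 1| - |BellD P 1 0 - BellD P 1 1|)|)
           (|(|BellD P 0 0 - BellD P 1 0| - |BellD P 0 1 - BellD P 1 1|)|))
      (|(|BellD P 0 0 - BellD P 1 1| - |BellD P 0 1 - BellD P 1 0|)|)

/-- The signed Mermin functions `M_{αβγ}`. -/
def MerminF (P : Box) (a b g : Fin 2) : ℝ :=
  if a = 0 ∧ b = 0 then sgn g * (corr P 0 1 + corr P 1 0)
  else if a = 0 ∧ b = 1 then sgn g * (corr P 0 0 + corr P 1 1)
  else if a = 1 ∧ b = 0 then sgn g * (corr P 0 1 - corr P 1 0)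
  else sgn g * (corr P 0 0 - corr P 1 1)

/-- The Mermin distances `M_{αβ} = max_γ |M_{αβγ}|`. -/
def MerminD (P : Box) (a b : Fin 2) : ℝ := max |MerminF P a b 0| |MerminF P a b 1|

/-- Mermin discord `Q`. -/
def MerminDiscord (P : Box) : ℝ :=
  min (min (|(|MerminD P 0 0 - MerminD P 0 1| - |MerminD P 1 0 - MerminD P 1 1|)|)
           (|(|MerminD P 0 0 - MerminD P 1 0| - |MerminD P 0 1 - MerminD P 1 1|)|))
      (|(|MerminD P 0 0 - MerminD P 1 1| - |MerminD P 0 1 - MerminD P 1 0|)|)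

/-- The signed product Bell expressions, built from products of marginal expectations. -/
def BellProdF (P : Box) (a b : Fin 2) : ℝ :=
  margA P 0 * margB P 0 + sgn b * (margA P 0 * margB P 1) + sgn a * (margA P 1 * margB P 0) +
    sgn (a + b + 1) * (margA P 1 * margB P 1)

/-- `B^{prod}_{αβ}`. -/
def BellProdD (P : Box) (a b : Fin 2) : ℝ := |BellProdF P a b|

/-- The total-correlation measure `T = max_{αβ} |B_{αβ} - B^{prod}_{αβ}|`. -/
def Tmeasure (P : Box) : ℝ :=
  max (max (|BellD P 0 0 - BellProdD P 0 0|) (|BellD P 0 1 - BellProdD P 0 1|))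
      (max (|BellD P 1 0 - BellProdD P 1 0|) (|BellD P 1 1 - BellProdD P 1 1|))

/-- A product box: the joint distribution factorizes into marginal distributions. -/
def IsProduct (P : Box) : Prop :=
  ∃ PA PB : Fin 2 → Fin 2 → ℝ,
    (∀ i m, 0 ≤ PA i m) ∧ (∀ i, ∑ m, PA i m = 1) ∧
    (∀ j n, 0 ≤ PB j n) ∧ (∀ j, ∑ n, PB j n = 1) ∧
    ∀ i j m n, P i j m n = PA i m * PB j n

/-- A local box: a convex combination of local deterministic boxes. -/
def IsLocal (P : Box) : Prop :=
  ∃ q : Fin 2 → Fin 2 → Fin 2 → Fin 2 → ℝ,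
    (∀ a b g e, 0 ≤ q a b g e) ∧ (∑ a, ∑ b, ∑ g, ∑ e, q a b g e) = 1 ∧
    ∀ i j m n, P i j m n = ∑ a, ∑ b, ∑ g, ∑ e, q a b g e * Dbox a b g e i j m n

/-- Local reversible operation (relabeling of inputs and, conditionally, outputs). -/
def relabel (sA a b sB c d : Fin 2) (P : Box) : Box :=
  fun i j m n => P (i + sA) (j + sB) (m + a * i + b) (n + c * j + d)

/-- Pauli matrices. -/
def σx : Matrix (Fin 2) (Fin 2) ℂ := !![0, 1; 1, 0]
def σy : Matrix (Fin 2) (Fin 2) ℂ := !![0, -Complex.I; Complex.I, 0]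
def σz : Matrix (Fin 2) (Fin 2) ℂ := !![1, 0; 0, -1]

/-- The observable `â · σ⃗` for a direction `â = (a_x, a_y, a_z)`. -/
def obs (v : ℝ × ℝ × ℝ) : Matrix (Fin 2) (Fin 2) ℂ :=
  (v.1 : ℂ) • σx + (v.2.1 : ℂ) • σy + (v.2.2 : ℂ) • σz

/-- Quantum correlator `⟨A ⊗ B⟩_ρ = Tr(ρ (A ⊗ B))`. -/
def qCorr (ρ : Matrix (Fin 2 × Fin 2) (Fin 2 × Fin 2) ℂ)
    (A B : Matrix (Fin 2) (Fin 2) ℂ) : ℝ := (Matrix.trace (ρ * (A ⊗ₖ B))).re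

/-- Projector onto the `(-1)^m` eigenspace of a ±1-valued observable `A`. -/
def projOut (A : Matrix (Fin 2) (Fin 2) ℂ) (m : Fin 2) : Matrix (Fin 2) (Fin 2) ℂ :=
  (2⁻¹ : ℂ) • ((1 : Matrix (Fin 2) (Fin 2) ℂ) + ((-1 : ℂ) ^ (m : ℕ)) • A)

/-- The quantum box determined by a two-qubit state and local observables. -/
def qBox (ρ : Matrix (Fin 2 × Fin 2) (Fin 2 × Fin 2) ℂ)
    (A0 A1 B0 B1 : Matrix (Fin 2) (Fin 2) ℂ) : Box :=
  fun i j m n =>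
    (Matrix.trace (ρ * ((projOut (if i = 0 then A0 else A1) m) ⊗ₖ
      (projOut (if j = 0 then B0 else B1) n)))).re

/-- The Bell state `|ψ⁺⟩ = (|00⟩ + |11⟩)/√2` as a density matrix. -/
def ρBell : Matrix (Fin 2 × Fin 2) (Fin 2 × Fin 2) ℂ :=
  Matrix.of fun x y =>
    (if x.1 = x.2 then ((Real.sqrt 2)⁻¹ : ℂ) else 0) *
      (if y.1 = y.2 then ((Real.sqrt 2)⁻¹ : ℂ) else 0)

/-- The Schmidt state `ρ_S` with parameters `c = cos 2θ`, `s = sin 2θ`. -/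
def ρSchmidt (c s : ℝ) : Matrix (Fin 2 × Fin 2) (Fin 2 × Fin 2) ℂ :=
  (4⁻¹ : ℂ) • ((1 : Matrix (Fin 2 × Fin 2) (Fin 2 × Fin 2) ℂ)
    + (c : ℂ) • (σz ⊗ₖ (1 : Matrix (Fin 2) (Fin 2) ℂ) + (1 : Matrix (Fin 2) (Fin 2) ℂ) ⊗ₖ σz)
    + (s : ℂ) • (σx ⊗ₖ σx - σy ⊗ₖ σy) + σz ⊗ₖ σz)


/-- the isotropic Mermin box `p·(1/2)(PR^{000}+PR^{111}) + (1−p)·P_N` has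
exactly one nonzero Mermin distance, equal to `2p`, hence Mermin discord `Q = 2p`,
and its Bell discord vanishes. -/
theorem stmt8 (p : ℝ) (h0 : 0 ≤ p) (h1 : p ≤ 1) :
    let P : Box :=
      p • ((1/2 : ℝ) • PRbox 0 0 0 + (1/2 : ℝ) • PRbox 1 1 1) + (1 - p) • whiteNoise
    (0 < p → ∃! ab : Fin 2 × Fin 2, MerminD P ab.1 ab.2 ≠ 0) ∧
      MerminD P 0 0 = 2 * p ∧ (∀ a b : Fin 2, (a, b) ≠ (0, 0) → MerminD P a b = 0) ∧
      MerminDiscord P = 2 * p ∧ BellDiscord P = 0 := by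
  intro P
  have hc00 : corr P 0 0 = 0 := by
    simp only [P]
    simp [corr, PRbox, whiteNoise, sgn, Fin.sum_univ_two]
  have hc01 : corr P 0 1 = p := by
    simp only [P]
    simp [corr, PRbox, whiteNoise, sgn, Fin.sum_univ_two]; ring
  have hc10 : corr P 1 0 = p := by
    simp only [P]
    simp [corr, PRbox, whiteNoise, sgn, Fin.sum_univ_two]; ring
  have hc11 : corr P 1 1 = 0 := by
    simp only [P]
    simp [corr, PRbox, whiteNoise, sgn, Fin.sum_univ_two]
  have habs : |2 * p| = 2 * p := abs_of_nonneg (by linarith)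
  have hM00 : MerminD P 0 0 = 2 * p := by
    simp [MerminD, MerminF, sgn, hc01, hc10]
    rw [show p + p = 2 * p by ring, show -p + -p = -(2*p) by ring, abs_neg, habs]
    simp
  have hM01 : MerminD P 0 1 = 0 := by
    simp [MerminD, MerminF, sgn, hc00, hc11]
  have hM10 : MerminD P 1 0 = 0 := by
    simp [MerminD, MerminF, sgn, hc01, hc10]
  have hM11 : MerminD P 1 1 = 0 := by
    simp [MerminD, MerminF, sgn, hc00, hc11]
  have hother : ∀ a b : Fin 2, (a, b) ≠ (0, 0) → MerminD P a b = 0 := by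
    intro a b hab
    fin_cases a <;> fin_cases b <;> simp_all
  refine ⟨?_, hM00, hother, ?_, ?_⟩
  · intro hp
    refine ⟨(0, 0), by simp [hM00]; positivity, ?_⟩
    rintro ⟨a, b⟩ h
    by_contra hne
    exact h (hother a b (by simpa using hne))
  · simp [MerminDiscord, hM00, hM01, hM10, hM11, habs, abs_abs]
  · have hB00 : BellD P 0 0 = 2 * p := by
      simp [BellD, BellF, sgn, hc00, hc01, hc10, hc11]
      rw [show p + p = 2 * p by ring, show -p + -p = -(2*p) by ring, abs_neg, habs]
      simp
    have hB01 : BellD P 0 1 = 0 := by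
      simp [BellD, BellF, sgn, hc00, hc01, hc10, hc11]
    have hB10 : BellD P 1 0 = 0 := by
      simp [BellD, BellF, sgn, hc00, hc01, hc10, hc11]
    have hB11 : BellD P 1 1 = 2 * p := by
      simp [BellD, BellF, sgn, hc00, hc01, hc10, hc11]
      rw [show p + p = 2 * p by ring, show -p + -p = -(2*p) by ring, abs_neg, habs]
      simp
    simp [BellDiscord, hB00, hB01, hB10, hB11]

end
end

section
/- The correlations of the two-qubit Bell state |ψ+⟩ = (|00⟩+|11⟩)/√2 under measurements A_0 = σ_x, A_1 = σ_y, B_0 = √p σ_x − √(1−p) σ_y, B_1 = √(1−p) σ_x + √p σ_y (for 1/2 ≤ p ≤ 1) satisfy ⟨A_0B_0⟩ = √p, ⟨A_0B_1⟩ = √(1−p), ⟨A_1B_0⟩ = √(1−p), ⟨A_1B_1⟩ = −√p, so the CHSH value is B_{00} = 2(√p + √(1−p)), which exceeds 2 if and only if p ≠ 1, and the Mermin/steering value M_{11} = |⟨A_0B_0⟩ − ⟨A_1B_1⟩| = 2√p exceeds √2 if and only if p > 1/2. -/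
open scoped Matrix Kronecker

noncomputable section

lemma qCorr_bell (v w : ℝ × ℝ × ℝ) :
    qCorr ρBell (obs v) (obs w) = v.1 * w.1 - v.2.1 * w.2.1 + v.2.2 * w.2.2 := by
  obtain ⟨a, b, c⟩ := v; obtain ⟨d, e, f⟩ := w
  have h2 : ((Real.sqrt 2 : ℝ) : ℂ)⁻¹ * ((Real.sqrt 2 : ℝ) : ℂ)⁻¹ = 2⁻¹ := by
    rw [← Complex.ofReal_inv, ← Complex.ofReal_mul, ← mul_inv,
      Real.mul_self_sqrt (by norm_num : (0:ℝ) ≤ 2)]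
    norm_num
  simp only [qCorr, obs, ρBell, σx, σy, σz, Matrix.trace, Matrix.diag, Matrix.mul_apply,
    Matrix.kroneckerMap_apply, Fintype.sum_prod_type, Fin.sum_univ_two, Matrix.of_apply,
    Matrix.add_apply, Matrix.smul_apply, Matrix.cons_val', Matrix.cons_val_zero,
    Matrix.cons_val_one, Matrix.head_cons, Matrix.head_fin_const, Matrix.empty_val',
    Matrix.cons_val_fin_one, smul_eq_mul]
  norm_num
  ring_nf
  simp [h2, Complex.ext_iff]
  ring

/-- correlators, CHSH value and steering value of the Bell state under the
measurements `A₀ = σx`, `A₁ = σy`, `B₀ = √p σx − √(1−p) σy`, `B₁ = √(1−p) σx + √p σy`. -/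
theorem stmt14 (p : ℝ) (hp : 1/2 ≤ p) (hp1 : p ≤ 1) :
    let A0 := obs (1, 0, 0)
    let A1 := obs (0, 1, 0)
    let B0 := obs (Real.sqrt p, -Real.sqrt (1 - p), 0)
    let B1 := obs (Real.sqrt (1 - p), Real.sqrt p, 0)
    qCorr ρBell A0 B0 = Real.sqrt p ∧
      qCorr ρBell A0 B1 = Real.sqrt (1 - p) ∧
      qCorr ρBell A1 B0 = Real.sqrt (1 - p) ∧
      qCorr ρBell A1 B1 = -Real.sqrt p ∧
      qCorr ρBell A0 B0 + qCorr ρBell A0 B1 + qCorr ρBell A1 B0 - qCorr ρBell A1 B1 =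
        2 * (Real.sqrt p + Real.sqrt (1 - p)) ∧
      (2 * (Real.sqrt p + Real.sqrt (1 - p)) > 2 ↔ p ≠ 1) ∧
      |qCorr ρBell A0 B0 - qCorr ρBell A1 B1| = 2 * Real.sqrt p ∧
      (2 * Real.sqrt p > Real.sqrt 2 ↔ p > 1/2) := by
  intro A0 A1 B0 B1
  have hq : 0 ≤ 1 - p := by linarith
  have hpnn : 0 ≤ p := by linarith
  have h00 : qCorr ρBell A0 B0 = Real.sqrt p := by
    rw [show A0 = obs (1,0,0) from rfl, show B0 = obs (Real.sqrt p, -Real.sqrt (1-p), 0) from rfl,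
      qCorr_bell]; ring
  have h01 : qCorr ρBell A0 B1 = Real.sqrt (1 - p) := by
    rw [show A0 = obs (1,0,0) from rfl, show B1 = obs (Real.sqrt (1-p), Real.sqrt p, 0) from rfl,
      qCorr_bell]; ring
  have h10 : qCorr ρBell A1 B0 = Real.sqrt (1 - p) := by
    rw [show A1 = obs (0,1,0) from rfl, show B0 = obs (Real.sqrt p, -Real.sqrt (1-p), 0) from rfl,
      qCorr_bell]; ring
  have h11 : qCorr ρBell A1 B1 = -Real.sqrt p := by
    rw [show A1 = obs (0,1,0) from rfl, show B1 = obs (Real.sqrt (1-p), Real.sqrt p, 0) from rfl,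
      qCorr_bell]; ring
  refine ⟨h00, h01, h10, h11, by rw [h00, h01, h10, h11]; ring, ?_, ?_, ?_⟩
  · constructor
    · intro h hpe
      rw [hpe] at h
      simp at h
    · intro hne
      have hplt : p < 1 := lt_of_le_of_ne hp1 hne
      have h1 : p ≤ Real.sqrt p := by
        nlinarith [Real.sq_sqrt hpnn, Real.sqrt_nonneg p]
      have h2 : 1 - p < Real.sqrt (1 - p) := by
        nlinarith [Real.sq_sqrt hq, Real.sqrt_nonneg (1 - p)]
      linarith
  · rw [h00, h11, sub_neg_eq_add, abs_of_nonneg (by positivity)]; ring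
  · have hs2 : Real.sqrt 2 = 2 * Real.sqrt (1/2) := by
      rw [show (2:ℝ) = 2^2 * (1/2) by norm_num, Real.sqrt_mul (by positivity),
        Real.sqrt_sq (by norm_num : (0:ℝ) ≤ 2)]
      norm_num
    rw [hs2]
    constructor
    · intro h
      by_contra hle
      push_neg at hle
      have := Real.sqrt_le_sqrt hle
      linarith
    · intro h
      have := Real.sqrt_lt_sqrt (by norm_num : (0:ℝ) ≤ 1/2) h
      linarith

end
end

section
/- For the maximally-mixed-marginals box P = s·[(1/√2)P_PR^{000} + (1−1/√2)P_N] + (1−s)·P_N with 0 ≤ s ≤ 1, one has T(P) = G(P) = 2√2·s, and P violates the CHSH inequality B_{000} ≤ 2 if and only if s > 1/√2. -/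
open scoped Matrix Kronecker

noncomputable section

/-! Correlators and marginal expectations are linear in the box. The PR box `PRbox 0 0 0` has
correlators `(-1)^{ij}` and white noise has none, so `P` has the PR-type correlators
`c (-1)^{ij}` with `c = s/√2`, and all its marginals vanish. For PR-type correlators only the
CHSH expressions `B_{00γ} = ±4c` survive, so every Bell distance except `B_{00} = 4|c|` is zero
and so is every `B^{prod}`; both `T` and `G` then reduce to `4c = 2√2 s`. -/

@[simp] lemma sgn_zero : sgn 0 = 1 := pow_zero _

@[simp] lemma sgn_one : sgn 1 = -1 := pow_one _

@[simp] lemma sgn_add (k l : Fin 2) : sgn (k + l) = sgn k * sgn l := by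
  fin_cases k <;> fin_cases l <;> simp [sgn]

section Linearity

variable (P Q : Box) (t : ℝ) (i j : Fin 2)

@[simp] lemma corr_add : corr (P + Q) i j = corr P i j + corr Q i j := by
  simp only [corr, Pi.add_apply, mul_add, Finset.sum_add_distrib]

@[simp] lemma corr_smul : corr (t • P) i j = t * corr P i j := by
  simp only [corr, Pi.smul_apply, smul_eq_mul, Finset.mul_sum, mul_left_comm]

@[simp] lemma margA_add : margA (P + Q) i = margA P i + margA Q i := by
  simp only [margA, Pi.add_apply, mul_add, Finset.sum_add_distrib]

@[simp] lemma margA_smul : margA (t • P) i = t * margA P i := by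
  simp only [margA, Pi.smul_apply, smul_eq_mul, Finset.mul_sum, mul_left_comm]

end Linearity

@[simp] lemma corr_PRbox (a b g i j : Fin 2) :
    corr (PRbox a b g) i j = sgn (i * j + a * i + b * j + g) := by
  unfold corr PRbox
  generalize i * j + a * i + b * j + g = k
  fin_cases k <;> simp [Fin.sum_univ_two] <;> norm_num

@[simp] lemma margA_PRbox (a b g i : Fin 2) : margA (PRbox a b g) i = 0 := by
  unfold margA PRbox
  generalize i * 0 + a * i + b * 0 + g = k
  fin_cases k <;> simp [Fin.sum_univ_two]

@[simp] lemma corr_whiteNoise (i j : Fin 2) : corr whiteNoise i j = 0 := by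
  simp [corr, whiteNoise, Fin.sum_univ_two]

@[simp] lemma margA_whiteNoise (i : Fin 2) : margA whiteNoise i = 0 := by
  simp [margA, whiteNoise, Fin.sum_univ_two]

section PRCorrelations

variable {P : Box} {c : ℝ} (hc : ∀ i j, corr P i j = c * sgn (i * j))
include hc

lemma BellF_of_corr_eq (a b g : Fin 2) :
    BellF P a b g = if a = 0 ∧ b = 0 then 4 * c * sgn g else 0 := by
  simp only [BellF, hc]
  fin_cases a <;> fin_cases b <;> simp
  ring

lemma BellD_of_corr_eq (a b : Fin 2) :
    BellD P a b = if a = 0 ∧ b = 0 then 4 * |c| else 0 := by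
  simp only [BellD, BellF_of_corr_eq hc]
  split_ifs <;> simp [abs_mul]

lemma BellDiscord_of_corr_eq : BellDiscord P = 4 * |c| := by
  simp [BellDiscord, BellD_of_corr_eq hc]

lemma Tmeasure_of_corr_eq (hA : ∀ i, margA P i = 0) : Tmeasure P = 4 * |c| := by
  simp [Tmeasure, BellProdD, BellProdF, BellD_of_corr_eq hc, hA]

end PRCorrelations

theorem stmt16_general (s : ℝ) (h0 : 0 ≤ s) :
    let P : Box := s • ((Real.sqrt 2)⁻¹ • PRbox 0 0 0 +
      (1 - (Real.sqrt 2)⁻¹) • whiteNoise) + (1 - s) • whiteNoise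
    Tmeasure P = 2 * Real.sqrt 2 * s ∧ BellDiscord P = 2 * Real.sqrt 2 * s ∧
      (BellF P 0 0 0 > 2 ↔ s > (Real.sqrt 2)⁻¹) := by
  intro P
  have hcorr : ∀ i j, corr P i j = s * (Real.sqrt 2)⁻¹ * sgn (i * j) := fun i j => by
    simp [P]; ring
  have hA : ∀ i, margA P i = 0 := fun i => by simp [P]
  have h4 : 4 * (s * (Real.sqrt 2)⁻¹) = 2 * Real.sqrt 2 * s := by
    field_simp
    linear_combination (-2 * s) * Real.sq_sqrt zero_le_two
  have h4_abs : 4 * |s * (Real.sqrt 2)⁻¹| = 2 * Real.sqrt 2 * s := by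
    rw [abs_of_nonneg (by positivity), h4]
  have hB : BellF P 0 0 0 = 2 * Real.sqrt 2 * s := by
    simp [BellF_of_corr_eq hcorr, h4]
  have htwo : 2 * Real.sqrt 2 * (Real.sqrt 2)⁻¹ = 2 := by field_simp
  refine ⟨h4_abs ▸ Tmeasure_of_corr_eq hcorr hA, h4_abs ▸ BellDiscord_of_corr_eq hcorr, ?_⟩
  rw [hB, gt_iff_lt, gt_iff_lt,
    ← mul_lt_mul_iff_right₀ (by positivity : 0 < 2 * Real.sqrt 2) (b := (Real.sqrt 2)⁻¹), htwo]

/-- for the maximally-mixed-marginals box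
`P = s[(1/√2)PR^{000} + (1−1/√2)P_N] + (1−s)P_N`, one has `T(P) = G(P) = 2√2·s` and `P`
violates the CHSH inequality `B_{000} ≤ 2` iff `s > 1/√2`. -/
theorem stmt16 (s : ℝ) (h0 : 0 ≤ s) (h1 : s ≤ 1) :
    let P : Box := s • ((Real.sqrt 2)⁻¹ • PRbox 0 0 0 +
      (1 - (Real.sqrt 2)⁻¹) • whiteNoise) + (1 - s) • whiteNoise
    Tmeasure P = 2 * Real.sqrt 2 * s ∧ BellDiscord P = 2 * Real.sqrt 2 * s ∧
      (BellF P 0 0 0 > 2 ↔ s > (Real.sqrt 2)⁻¹) :=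
  stmt16_general s h0

end
end
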